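/- Let A ∈ ℝ^{d×d}, f : ℝᵈ → ℝᵈ, and V : ℝᵈ → ℝ differentiable with ⟨A†f(z), ∇V(z)⟩ ≤ 0 and ∇V(z) ∈ Null(A)^⊥ for z in a set M. For z with ⟨A†f(z), ∇V(z)⟩ ≠ 0, define S(z) = (1/⟨A†f(z), ∇V(z)⟩) f(z)(A†f(z))ᵀ. Then S(z)∇V(z) = f(z) and A†S(z) is negative semidefinite for all such z ∈ M. -/
import Mathlib

open Matrix


lemma vmv_mulVec {d : ℕ} (u v w : Fin d → ℝ) :
    (vecMulVec u v).mulVec w = (v ⬝ᵥ w) • u := by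
  funext i
  simp only [mulVec, vecMulVec_apply, dotProduct, Pi.smul_apply, smul_eq_mul,
    Finset.sum_mul]
  exact Finset.sum_congr rfl fun j _ => by ring

lemma mul_vmv {d : ℕ} (B : Matrix (Fin d) (Fin d) ℝ) (u v : Fin d → ℝ) :
    B * vecMulVec u v = vecMulVec (B.mulVec u) v := by
  ext i j
  simp only [mul_apply, vecMulVec_apply, mulVec, dotProduct, Finset.sum_mul]
  exact Finset.sum_congr rfl fun k _ => by ring

/-- Existence of a linear gradient structure for a dissipative DAE: the
rank-one matrix `S(z)` satisfies `S(z)∇V(z) = f(z)` and `A†S(z)` is negative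
semidefinite on `M`, wherever `⟨A†f(z), ∇V(z)⟩ ≠ 0`. -/
theorem stmt8 {d : ℕ} (A Ad : Matrix (Fin d) (Fin d) ℝ)
    (hA1 : A * Ad * A = A) (hA2 : Ad * A * Ad = Ad)
    (hA3 : (Ad * A)ᵀ = Ad * A) (hA4 : (A * Ad)ᵀ = A * Ad)
    (f : (Fin d → ℝ) → (Fin d → ℝ))
    (V : (Fin d → ℝ) → ℝ) (hV : Differentiable ℝ V)
    (gV : (Fin d → ℝ) → (Fin d → ℝ))
    (hgV : ∀ x w, fderiv ℝ V x w = gV x ⬝ᵥ w)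
    (M : Set (Fin d → ℝ))
    (hproper : ∀ z ∈ M, ∀ e : Fin d → ℝ, A.mulVec e = 0 → gV z ⬝ᵥ e = 0)
    (hdiss : ∀ z ∈ M, Ad.mulVec (f z) ⬝ᵥ gV z ≤ 0)
    (S : (Fin d → ℝ) → Matrix (Fin d) (Fin d) ℝ)
    (hSdef : ∀ z : Fin d → ℝ, Ad.mulVec (f z) ⬝ᵥ gV z ≠ 0 →
      S z = (Ad.mulVec (f z) ⬝ᵥ gV z)⁻¹ • vecMulVec (f z) (Ad.mulVec (f z))) :
    ∀ z ∈ M, Ad.mulVec (f z) ⬝ᵥ gV z ≠ 0 →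
      (S z).mulVec (gV z) = f z ∧
      (∀ w : Fin d → ℝ, w ⬝ᵥ (Ad * S z).mulVec w ≤ 0) := by
  intro z hz hne
  set c : ℝ := Ad.mulVec (f z) ⬝ᵥ gV z with hc
  have hclt : c < 0 := lt_of_le_of_ne (hdiss z hz) hne
  rw [hSdef z hne]
  have hci : c⁻¹ ≤ 0 := le_of_lt (inv_neg''.mpr hclt)
  constructor
  · rw [smul_mulVec, vmv_mulVec, ← hc, smul_smul, inv_mul_cancel₀ hne,
      one_smul]
  · intro w
    rw [Matrix.mul_smul, mul_vmv, smul_mulVec, vmv_mulVec]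
    simp only [dotProduct_smul, smul_dotProduct, smul_eq_mul, dotProduct_comm w, ← hc]
    nlinarith [mul_self_nonneg (Ad.mulVec (f z) ⬝ᵥ w)]
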